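/- arXiv:2308.04399 — 2 statements merged into one kernel-verified Lean document; each statement's English description precedes it below -/
import Mathlib

section
/- In the one-specialist fine-tuning game with quadratic costs (k₀ = k₁ = 2), the value δ ∈ [0,1] maximizing the specialist's equilibrium utility U_D(δ) = 1/(4c₁) + (1/(2c₀) - 1/(2c₁))δ + (1/(4c₁) - 1/(2c₀))δ² is δ = (c₁-c₀)/(2c₁-c₀) if c₁ ≥ c₀, and δ = 0 if c₁ < c₀. -/
/-! For `c₀ ≤ c₁` the utility is a concave quadratic in `δ`, maximized at its vertex
`(c₁-c₀)/(2c₁-c₀)`, which lies in `[0,1]`. For `c₁ < c₀` write `U_D(δ) - U_D(0) = δ (b + c δ)`: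
the slope `b + c δ` is affine in `δ` and nonpositive at both ends, `b = 1/(2c₀) - 1/(2c₁)` and
`b + c = -1/(4c₁)`, so `U_D(δ) ≤ U_D(0)` on `[0,1]`. -/

open Set

theorem isMaxOn_quadratic_vertex (a b : ℝ) {c : ℝ} (hc : c < 0) :
    IsMaxOn (fun x : ℝ => a + b * x + c * x ^ 2) univ (-b / (2 * c)) := by
  intro x _
  have hc0 : c ≠ 0 := hc.ne
  have hsq : a + b * (-b / (2 * c)) + c * (-b / (2 * c)) ^ 2 - (a + b * x + c * x ^ 2)
      = -c * (x + b / (2 * c)) ^ 2 := by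
    field_simp
    ring
  have : 0 ≤ -c * (x + b / (2 * c)) ^ 2 := mul_nonneg (by linarith) (sq_nonneg _)
  simp only [mem_ofPred_eq]
  linarith

theorem isMaxOn_quadratic_Icc_zero (a : ℝ) {b c : ℝ} (hb : b ≤ 0) (hbc : b + c ≤ 0) :
    IsMaxOn (fun x : ℝ => a + b * x + c * x ^ 2) (Icc 0 1) 0 := by
  rintro x ⟨hx0, hx1⟩
  have hslope : b + c * x ≤ 0 := by
    rw [show b + c * x = (1 - x) * b + x * (b + c) by ring]
    exact add_nonpos (mul_nonpos_of_nonneg_of_nonpos (sub_nonneg.mpr hx1) hb)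
      (mul_nonpos_of_nonneg_of_nonpos hx0 hbc)
  have : x * (b + c * x) ≤ 0 := mul_nonpos_of_nonneg_of_nonpos hx0 hslope
  simp only [mem_ofPred_eq]
  linarith

/-- Powerful-D solution with quadratic costs: `U_D` is maximized on `[0,1]`
at `(c₁-c₀)/(2c₁-c₀)` if `c₁ ≥ c₀`, and at `0` if `c₁ < c₀`. -/
theorem stmt7 (c0 c1 : ℝ) (hc0 : 0 < c0) (hc1 : 0 < c1) :
    (c0 ≤ c1 →
      (c1 - c0) / (2 * c1 - c0) ∈ Set.Icc (0 : ℝ) 1 ∧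
      IsMaxOn
        (fun δ : ℝ => 1 / (4 * c1) + (1 / (2 * c0) - 1 / (2 * c1)) * δ
          + (1 / (4 * c1) - 1 / (2 * c0)) * δ ^ 2)
        (Set.Icc 0 1) ((c1 - c0) / (2 * c1 - c0))) ∧
    (c1 < c0 →
      IsMaxOn
        (fun δ : ℝ => 1 / (4 * c1) + (1 / (2 * c0) - 1 / (2 * c1)) * δ
          + (1 / (4 * c1) - 1 / (2 * c0)) * δ ^ 2)
        (Set.Icc 0 1) 0) := by
  constructor
  · intro hle
    have hden : 0 < 2 * c1 - c0 := by linarith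
    have hconcave : 1 / (4 * c1) - 1 / (2 * c0) < 0 := by
      rw [sub_neg, div_lt_div_iff₀ (by positivity) (by positivity)]
      linarith
    have hvertex : (c1 - c0) / (2 * c1 - c0)
        = -(1 / (2 * c0) - 1 / (2 * c1)) / (2 * (1 / (4 * c1) - 1 / (2 * c0))) := by
      rw [div_eq_iff hden.ne', eq_comm, div_mul_eq_mul_div, div_eq_iff (by linarith)]
      field_simp
      ring
    refine ⟨⟨div_nonneg (by linarith) hden.le, (div_le_one hden).mpr (by linarith)⟩, ?_⟩
    rw [hvertex]
    exact (isMaxOn_quadratic_vertex _ _ hconcave).on_subset (subset_univ _)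
  · intro hlt
    apply isMaxOn_quadratic_Icc_zero
    · rw [sub_nonpos, div_le_div_iff₀ (by positivity) (by positivity)]
      linarith
    · have hsum : 1 / (2 * c0) - 1 / (2 * c1) + (1 / (4 * c1) - 1 / (2 * c0)) = -(1 / (4 * c1)) := by
        field_simp
        ring
      rw [hsum, neg_nonpos]
      positivity
end

section
/- In the multi-specialist multi-bargain game with quadratic costs, for fixed vector (δ₁,...,δₙ) ∈ [0,1]ⁿ, the subgame-perfect equilibrium strategies are α₀* = (Σⱼ δⱼ)/(2c₀) and αᵢ* = (Σⱼ δⱼ)/(2c₀) + (1-δᵢ)/(2cᵢ); more generally with polynomial exponents, α₀* = ((Σⱼδⱼ)/(c₀k₀))^{1/(k₀-1)} and αᵢ* = α₀* + ((1-δᵢ)/(cᵢkᵢ))^{1/(kᵢ-1)}. -/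
/-!
Each player maximises a function of the form `b t - c t ^ k` with `b ≥ 0`, `c > 0`, `k > 1`:
the specialist in the excess `t = αᵢ - α₀` with `b = 1 - δᵢ`, and the generalist, once the
specialists' best responses are substituted, in `t = α₀` with `b = Σⱼ δⱼ` (the rest of its payoff
does not depend on `α₀`). Since `t ↦ t ^ k` is convex, it lies above its tangent line at
`t* = (b / (c k)) ^ (1 / (k - 1))`, whose slope `k t* ^ (k - 1) = b / c` is exactly the one that
makes `t*` the maximiser.
-/

open Set

namespace Real

lemma rpow_add_mul_rpow_sub_one_mul_sub_le {k x y : ℝ} (hk : 1 ≤ k) (hx : 0 ≤ x) (hy : 0 < y) :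
    y ^ k + k * y ^ (k - 1) * (x - y) ≤ x ^ k := by
  have bernoulli : 1 + k * (x / y - 1) ≤ (1 + (x / y - 1)) ^ k :=
    one_add_mul_self_le_rpow_one_add (by linarith [div_nonneg hx hy.le]) hk
  rw [add_sub_cancel, div_rpow hx hy.le, le_div_iff₀ (rpow_pos_of_pos hy k)] at bernoulli
  have hyk : y ^ k = y ^ (k - 1) * y := by rw [← rpow_add_one hy.ne', sub_add_cancel]
  calc y ^ k + k * y ^ (k - 1) * (x - y)
      = (1 + k * (x / y - 1)) * y ^ k := by rw [hyk]; field_simp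
    _ ≤ x ^ k := bernoulli

lemma isMaxOn_mul_sub_mul_rpow {b c k : ℝ} (hb : 0 ≤ b) (hc : 0 < c) (hk : 1 < k) :
    IsMaxOn (fun t => b * t - c * t ^ k) (Ici 0) ((b / (c * k)) ^ (1 / (k - 1))) := by
  intro t (ht : 0 ≤ t)
  show b * t - c * t ^ k ≤ b * _ - c * _ ^ k
  have hk0 : 0 < k := by linarith
  rcases hb.eq_or_lt with rfl | hb
  · rw [zero_div, zero_rpow (by simp; linarith), zero_rpow hk0.ne']
    nlinarith [rpow_nonneg ht k]
  have hslope : c * k * ((b / (c * k)) ^ (1 / (k - 1))) ^ (k - 1) = b := by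
    rw [one_div, rpow_inv_rpow (by positivity) (by linarith)]
    field_simp
  set tStar := (b / (c * k)) ^ (1 / (k - 1))
  have tangent := rpow_add_mul_rpow_sub_one_mul_sub_le hk.le ht (by positivity : 0 < tStar)
  linear_combination c * tangent + (tStar - t) * hslope

end Real

open Real

lemma isMaxOn_mul_sub_mul_sub_rpow {b c k : ℝ} (hb : 0 ≤ b) (hc : 0 < c) (hk : 1 < k) (a : ℝ) :
    IsMaxOn (fun t => b * t - c * (t - a) ^ k) (Ici a) (a + (b / (c * k)) ^ (1 / (k - 1))) := by
  intro t (ht : a ≤ t)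
  have := isMaxOn_mul_sub_mul_rpow hb hc hk (sub_nonneg.2 ht)
  simp only [mem_ofPred_eq, add_sub_cancel_left] at this ⊢
  linarith

theorem stmt17_general (n : ℕ) (c0 k0 : ℝ) (c k : Fin n → ℝ)
    (δ : Fin n → ℝ)
    (hc0 : 0 < c0) (hk0 : 1 < k0)
    (hc : ∀ i, 0 < c i) (hk : ∀ i, 1 < k i)
    (hδ : ∀ i, δ i ∈ Set.Icc (0 : ℝ) 1)
    (α0s : ℝ)
    (hα0s : α0s = ((∑ j, δ j) / (c0 * k0)) ^ (1 / (k0 - 1))) :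
    -- each specialist's best response to any `α₀ ≥ 0`
    (∀ α0, 0 ≤ α0 → ∀ i,
      IsMaxOn (fun α => (1 - δ i) * α - c i * (α - α0) ^ (k i)) (Set.Ici α0)
        (α0 + ((1 - δ i) / (c i * k i)) ^ (1 / (k i - 1)))) ∧
    -- the generalist, anticipating the best responses, optimally invests `α₀*`
    IsMaxOn
      (fun α0 => (∑ i, δ i * (α0 + ((1 - δ i) / (c i * k i)) ^ (1 / (k i - 1))))
        - c0 * α0 ^ k0)
      (Set.Ici (0 : ℝ)) α0s ∧
    -- quadratic specialization of the closed forms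
    (k0 = 2 → α0s = (∑ j, δ j) / (2 * c0)) ∧
    (∀ i, k i = 2 →
      ((1 - δ i) / (c i * k i)) ^ (1 / (k i - 1)) = (1 - δ i) / (2 * c i)) := by
  refine ⟨fun α0 _ i => isMaxOn_mul_sub_mul_sub_rpow (sub_nonneg.2 (hδ i).2) (hc i) (hk i) α0,
    ?_, fun h => by rw [hα0s, h]; norm_num [mul_comm], fun i h => by rw [h]; norm_num [mul_comm]⟩
  set r := fun i => ((1 - δ i) / (c i * k i)) ^ (1 / (k i - 1))
  show IsMaxOn (fun α0 => ∑ i, δ i * (α0 + r i) - c0 * α0 ^ k0) _ _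
  have payoff : ∀ α0 : ℝ, ∑ i, δ i * (α0 + r i) - c0 * α0 ^ k0
      = ((∑ j, δ j) * α0 - c0 * α0 ^ k0) + ∑ i, δ i * r i := by
    intro α0
    simp only [mul_add, Finset.sum_add_distrib, Finset.sum_mul, mul_comm (δ _) α0]
    ring
  simp only [payoff]
  rw [hα0s]
  exact (isMaxOn_mul_sub_mul_rpow (Finset.sum_nonneg fun j _ => (hδ j).1) hc0 hk0).add
    isMaxOn_const

/-- Multi-specialist multi-bargain fine-tuning game with polynomial costs:
for a fixed vector of bargains `δ`, the subgame-perfect equilibrium strategies are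
`α₀* = ((Σⱼδⱼ)/(c₀k₀))^(1/(k₀-1))` and `αᵢ* = α₀* + ((1-δᵢ)/(cᵢkᵢ))^(1/(kᵢ-1))`;
in the quadratic case these reduce to `α₀* = (Σⱼδⱼ)/(2c₀)` and
`αᵢ* = α₀* + (1-δᵢ)/(2cᵢ)`. -/
theorem stmt17 (n : ℕ) (hn : 1 ≤ n) (c0 k0 : ℝ) (c k : Fin n → ℝ)
    (δ : Fin n → ℝ)
    (hc0 : 0 < c0) (hk0 : 1 < k0)
    (hc : ∀ i, 0 < c i) (hk : ∀ i, 1 < k i)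
    (hδ : ∀ i, δ i ∈ Set.Icc (0 : ℝ) 1)
    (α0s : ℝ)
    (hα0s : α0s = ((∑ j, δ j) / (c0 * k0)) ^ (1 / (k0 - 1))) :
    -- each specialist's best response to any `α₀ ≥ 0`
    (∀ α0, 0 ≤ α0 → ∀ i,
      IsMaxOn (fun α => (1 - δ i) * α - c i * (α - α0) ^ (k i)) (Set.Ici α0)
        (α0 + ((1 - δ i) / (c i * k i)) ^ (1 / (k i - 1)))) ∧
    -- the generalist, anticipating the best responses, optimally invests `α₀*`
    IsMaxOn
      (fun α0 => (∑ i, δ i * (α0 + ((1 - δ i) / (c i * k i)) ^ (1 / (k i - 1))))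
        - c0 * α0 ^ k0)
      (Set.Ici (0 : ℝ)) α0s ∧
    -- quadratic specialization of the closed forms
    (k0 = 2 → α0s = (∑ j, δ j) / (2 * c0)) ∧
    (∀ i, k i = 2 →
      ((1 - δ i) / (c i * k i)) ^ (1 / (k i - 1)) = (1 - δ i) / (2 * c i)) :=
  stmt17_general n c0 k0 c k δ hc0 hk0 hc hk hδ α0s hα0s
end
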